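/- If X ⊢_R A (the consecution X ⊩ A is provable in the natural deduction system R), then the formula τ(X) → τ(A) is a theorem of the Hilbert system hR. -/
import Mathlib


/-- Formulas of the language L, generated from atoms by ¬, ∧, ∨, →, ∘. -/
inductive Fml : Type
  | atom : ℕ → Fml
  | neg : Fml → Fml
  | conj : Fml → Fml → Fml
  | disj : Fml → Fml → Fml
  | imp : Fml → Fml → Fml
  | fus : Fml → Fml → Fml

/-- Bunches: formulas are the atomic bunches, closed under comma and semicolon. -/
inductive Bunch : Type
  | fml : Fml → Bunch
  | comma : Bunch → Bunch → Bunch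
  | semi : Bunch → Bunch → Bunch

/-- Bunch contexts: a bunch with one distinguished hole at a bunch position. -/
inductive Ctx : Type
  | hole : Ctx
  | commaL : Ctx → Bunch → Ctx
  | commaR : Bunch → Ctx → Ctx
  | semiL : Ctx → Bunch → Ctx
  | semiR : Bunch → Ctx → Ctx

/-- Filling the hole of a bunch context with a bunch. -/
def Ctx.fill : Ctx → Bunch → Bunch
  | .hole, X => X
  | .commaL c Y, X => .comma (c.fill X) Y
  | .commaR Y c, X => .comma Y (c.fill X)
  | .semiL c Y, X => .semi (c.fill X) Y
  | .semiR Y c, X => .semi Y (c.fill X)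

/-- The natural deduction system R: as B but with (¬I) replaced by (¬I₂) and the
semicolon structural rules B, C, W added; `NDR X A` means X ⊩ A is provable in R. -/
inductive NDR : Bunch → Fml → Prop
  | id (A) : NDR (.fml A) A
  | impI {X A B} : NDR (.semi X (.fml A)) B → NDR X (.imp A B)
  | impE {X Y A B} : NDR X (.imp A B) → NDR Y A → NDR (.semi X Y) B
  | orI1 {X A} (B) : NDR X A → NDR X (.disj A B)
  | orI2 {X B} (A) : NDR X B → NDR X (.disj A B)
  | orE {X A B C} {Y : Ctx} : NDR X (.disj A B) → NDR (Y.fill (.fml A)) C →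
      NDR (Y.fill (.fml B)) C → NDR (Y.fill X) C
  | andI {X Y A B} : NDR X A → NDR Y B → NDR (.comma X Y) (.conj A B)
  | andE {X A B C} {Y : Ctx} : NDR X (.conj A B) →
      NDR (Y.fill (.comma (.fml A) (.fml B))) C → NDR (Y.fill X) C
  | fusI {X Y A B} : NDR X A → NDR Y B → NDR (.semi X Y) (.fus A B)
  | fusE {X A B C} {Y : Ctx} : NDR X (.fus A B) →
      NDR (Y.fill (.semi (.fml A) (.fml B))) C → NDR (Y.fill X) C
  | negI2 {X Y A B} : NDR (.semi X (.fml A)) (.neg B) → NDR Y B →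
      NDR (.semi X Y) (.neg A)
  | negE {X A} : NDR X (.neg (.neg A)) → NDR X A
  | cut {X A B} {Y : Ctx} : NDR X A → NDR (Y.fill (.fml A)) B → NDR (Y.fill X) B
  | eB {W : Ctx} {X Y Z A} : NDR (W.fill (.comma X (.comma Y Z))) A →
      NDR (W.fill (.comma (.comma X Y) Z)) A
  | eC {W : Ctx} {X Y A} : NDR (W.fill (.comma X Y)) A → NDR (W.fill (.comma Y X)) A
  | eW {W : Ctx} {X A} : NDR (W.fill (.comma X X)) A → NDR (W.fill X) A
  | eK {W : Ctx} {X Y A} : NDR (W.fill X) A → NDR (W.fill (.comma X Y)) A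
  | sB {W : Ctx} {X Y Z A} : NDR (W.fill (.semi X (.semi Y Z))) A →
      NDR (W.fill (.semi (.semi X Y) Z)) A
  | sC {W : Ctx} {X Y A} : NDR (W.fill (.semi X Y)) A → NDR (W.fill (.semi Y X)) A
  | sW {W : Ctx} {X A} : NDR (W.fill (.semi X X)) A → NDR (W.fill X) A

/-- Theoremhood in the Hilbert system hR. -/
inductive HR : Fml → Prop
  | A1 (A) : HR (.imp A A)
  | A2 (A B) : HR (.imp (.conj A B) A)
  | A3 (A B) : HR (.imp (.conj A B) B)
  | A4 (A B C) : HR (.imp (.conj (.imp A B) (.imp A C)) (.imp A (.conj B C)))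
  | A5 (A B) : HR (.imp A (.disj A B))
  | A6 (A B) : HR (.imp B (.disj A B))
  | A7 (A B C) : HR (.imp (.conj (.imp A C) (.imp B C)) (.imp (.disj A B) C))
  | A8 (A B C) : HR (.imp (.conj A (.disj B C)) (.disj (.conj A B) (.conj A C)))
  | A9 (A) : HR (.imp (.neg (.neg A)) A)
  | R1 {A B} : HR A → HR B → HR (.conj A B)
  | R2 {A B} : HR (.imp A B) → HR A → HR B
  | R3 {A B} : HR (.imp A (.neg B)) → HR (.imp B (.neg A))
  | R4 {A B C D} : HR (.imp A B) → HR (.imp C D) → HR (.imp (.imp B C) (.imp A D))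
  | contraAx (A B) : HR (.imp (.imp A (.neg B)) (.imp B (.neg A)))
  | R5 {A} : HR A → HR (.neg (.imp A (.neg A)))
  | conjTrans (A B C) : HR (.imp (.conj (.imp A B) (.imp B C)) (.imp A C))
  | lem (A) : HR (.disj A (.neg A))
  | R8 {A B C} : HR (.disj C (.imp A B)) → HR (.disj C A) → HR (.disj C B)
  | R9 {A C} : HR (.disj C A) → HR (.disj C (.neg (.imp A (.neg A))))
  | R10 {A B C D E} : HR (.disj E (.imp A B)) → HR (.disj E (.imp C D)) →
      HR (.disj E (.imp (.imp B C) (.imp A D)))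
  | A11 (A B C) : HR (.imp (.imp A B) (.imp (.imp B C) (.imp A C)))
  | A12 (A B C) : HR (.imp (.imp A B) (.imp (.imp C A) (.imp C B)))
  | A13 (A B) : HR (.imp (.imp A (.imp A B)) (.imp A B))
  | A14 (A B) : HR (.imp A (.imp (.imp A B) B))

/-- The translation τ: τ(A∘B)=¬(τ(A)→¬τ(B)) and τ commutes with the other connectives. -/
def tau : Fml → Fml
  | .atom p => .atom p
  | .neg A => .neg (tau A)
  | .conj A B => .conj (tau A) (tau B)
  | .disj A B => .disj (tau A) (tau B)
  | .imp A B => .imp (tau A) (tau B)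
  | .fus A B => .neg (.imp (tau A) (.neg (tau B)))

/-- The characteristic formula of a bunch: cf(A)=A, cf(X,Y)=cf(X)∧cf(Y),
cf(X;Y)=cf(X)∘cf(Y). -/
def cf : Bunch → Fml
  | .fml A => A
  | .comma X Y => .conj (cf X) (cf Y)
  | .semi X Y => .fus (cf X) (cf Y)


namespace HRlemmas

/-- Fusion at the formula level via the translation. -/
def FF (A B : Fml) : Fml := .neg (.imp A (.neg B))

lemma htrans {A B C : Fml} (h1 : HR (A.imp B)) (h2 : HR (B.imp C)) : HR (A.imp C) :=
  HR.R2 (HR.R2 (HR.A11 A B C) h1) h2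

lemma perm {A B C : Fml} (h : HR (A.imp (B.imp C))) : HR (B.imp (A.imp C)) :=
  htrans (HR.A14 B C) (HR.R2 (HR.A11 A (B.imp C) C) h)

lemma dni (A : Fml) : HR (A.imp A.neg.neg) := HR.R3 (HR.A1 A.neg)

lemma contrap {A B : Fml} (h : HR (A.imp B)) : HR (B.neg.imp A.neg) :=
  HR.R3 (htrans h (dni B))

lemma negImp (A B : Fml) : HR ((A.neg.imp B.neg).imp (B.imp A)) :=
  htrans (HR.contraAx A.neg B) (HR.R2 (HR.A12 A.neg.neg A B) (HR.A9 A))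

lemma contrapThm (A B : Fml) : HR ((A.imp B).imp (B.neg.imp A.neg)) :=
  htrans (HR.R2 (HR.A12 B B.neg.neg A) (dni B)) (HR.contraAx A B.neg)

lemma exportF {X A B : Fml} (h : HR ((FF X A).imp B)) : HR (X.imp (A.imp B)) := by
  have c1 : HR (B.neg.imp (X.imp A.neg)) := htrans (contrap h) (HR.A9 _)
  exact htrans (perm c1) (negImp B A)

lemma keyF (A B : Fml) : HR ((FF (A.imp B) A).imp B) := by
  have s2 : HR (B.neg.imp ((A.imp B).imp A.neg)) := perm (contrapThm A B)
  exact htrans (contrap s2) (HR.A9 B)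

lemma monF {X X' Y Y' : Fml} (h1 : HR (X.imp X')) (h2 : HR (Y.imp Y')) :
    HR ((FF X Y).imp (FF X' Y')) :=
  contrap (HR.R4 h1 (contrap h2))

lemma importF {X A B : Fml} (h : HR (X.imp (A.imp B))) : HR ((FF X A).imp B) :=
  htrans (monF h (HR.A1 A)) (keyF A B)

lemma conjComm (A B : Fml) : HR ((A.conj B).imp (B.conj A)) :=
  HR.R2 (HR.A4 (A.conj B) B A) (HR.R1 (HR.A3 A B) (HR.A2 A B))

lemma monConj {X X' Y Y' : Fml} (h1 : HR (X.imp X')) (h2 : HR (Y.imp Y')) :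
    HR ((X.conj Y).imp (X'.conj Y')) :=
  HR.R2 (HR.A4 (X.conj Y) X' Y')
    (HR.R1 (htrans (HR.A2 X Y) h1) (htrans (HR.A3 X Y) h2))

lemma conjAssoc (X Y Z : Fml) : HR (((X.conj Y).conj Z).imp (X.conj (Y.conj Z))) := by
  have p1 : HR (((X.conj Y).conj Z).imp X) := htrans (HR.A2 _ _) (HR.A2 _ _)
  have p2 : HR (((X.conj Y).conj Z).imp Y) := htrans (HR.A2 _ _) (HR.A3 _ _)
  have p3 : HR (((X.conj Y).conj Z).imp Z) := HR.A3 _ _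
  have q : HR (((X.conj Y).conj Z).imp (Y.conj Z)) :=
    HR.R2 (HR.A4 _ Y Z) (HR.R1 p2 p3)
  exact HR.R2 (HR.A4 _ X (Y.conj Z)) (HR.R1 p1 q)

lemma conjIdem (X : Fml) : HR (X.imp (X.conj X)) :=
  HR.R2 (HR.A4 X X X) (HR.R1 (HR.A1 X) (HR.A1 X))

lemma fusAssoc (x y z : Fml) : HR ((FF (FF x y) z).imp (FF x (FF y z))) := by
  set W := FF y z with hW
  set G := FF x W with hG
  have e1 : HR (x.imp (W.imp G)) := exportF (HR.A1 G)
  have e2 : HR (y.imp (z.imp W)) := exportF (HR.A1 W)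
  have t1 : HR (x.imp ((z.imp W).imp (z.imp G))) := htrans e1 (HR.A12 W G z)
  have t2 : HR (((z.imp W).imp (z.imp G)).imp (y.imp (z.imp G))) :=
    HR.R2 (HR.A11 y (z.imp W) (z.imp G)) e2
  exact importF (importF (htrans t1 t2))

lemma fusComm (x y : Fml) : HR ((FF x y).imp (FF y x)) :=
  importF (perm (exportF (HR.A1 (FF y x))))

lemma fusIdem (x : Fml) : HR (x.imp (FF x x)) := by
  set W := x.imp x.neg with hW
  have s1 : HR (x.imp (W.imp x.neg)) := perm (HR.A1 W)
  have s3 : HR (x.imp (x.imp W.neg)) := htrans s1 (HR.contraAx W x)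
  have s4 : HR (x.imp W.neg) := HR.R2 (HR.A13 x W.neg) s3
  have redu : HR (W.imp x.neg) := HR.R3 s4
  have c1 : HR ((FF x x).neg.imp x.neg) := htrans (HR.A9 W) redu
  exact htrans (HR.R3 c1) (HR.A9 (FF x x))

lemma orCase {A B C : Fml} (h1 : HR (A.imp C)) (h2 : HR (B.imp C)) :
    HR ((A.disj B).imp C) :=
  HR.R2 (HR.A7 A B C) (HR.R1 h1 h2)

lemma monDisj {X X' Y Y' : Fml} (h1 : HR (X.imp X')) (h2 : HR (Y.imp Y')) :
    HR ((X.disj Y).imp (X'.disj Y')) :=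
  orCase (htrans h1 (HR.A5 _ _)) (htrans h2 (HR.A6 _ _))

lemma fusDistR (X A B : Fml) :
    HR ((FF X (A.disj B)).imp ((FF X A).disj (FF X B))) := by
  set D := (FF X A).disj (FF X B) with hD
  have dA : HR (X.imp (A.imp D)) := exportF (HR.A5 _ _)
  have dB : HR (X.imp (B.imp D)) := exportF (HR.A6 _ _)
  have comb : HR (X.imp ((A.disj B).imp D)) :=
    htrans (HR.R2 (HR.A4 X (A.imp D) (B.imp D)) (HR.R1 dA dB)) (HR.A7 A B D)
  exact importF comb

lemma fusDistL (X A B : Fml) :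
    HR ((FF (A.disj B) X).imp ((FF A X).disj (FF B X))) := by
  set D := (FF A X).disj (FF B X) with hD
  have dA : HR (A.imp (X.imp D)) := exportF (HR.A5 _ _)
  have dB : HR (B.imp (X.imp D)) := exportF (HR.A6 _ _)
  exact importF (orCase dA dB)

lemma conjDistL (X A B : Fml) :
    HR (((A.disj B).conj X).imp ((A.conj X).disj (B.conj X))) :=
  htrans (conjComm _ _) (htrans (HR.A8 X A B)
    (monDisj (conjComm _ _) (conjComm _ _)))

lemma fillMono {U V : Bunch} (Y : Ctx)
    (h : HR ((tau (cf U)).imp (tau (cf V)))) :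
    HR ((tau (cf (Y.fill U))).imp (tau (cf (Y.fill V)))) := by
  induction Y with
  | hole => exact h
  | commaL c Z ih => exact monConj ih (HR.A1 _)
  | commaR Z c ih => exact monConj (HR.A1 _) ih
  | semiL c Z ih => exact monF ih (HR.A1 _)
  | semiR Z c ih => exact monF (HR.A1 _) ih

lemma fillDist (A B : Fml) (Y : Ctx) :
    HR ((tau (cf (Y.fill (.fml (A.disj B))))).imp
      ((tau (cf (Y.fill (.fml A)))).disj (tau (cf (Y.fill (.fml B)))))) := by
  induction Y with
  | hole => exact HR.A1 _
  | commaL c Z ih => exact htrans (monConj ih (HR.A1 _)) (conjDistL _ _ _)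
  | commaR Z c ih => exact htrans (monConj (HR.A1 _) ih) (HR.A8 _ _ _)
  | semiL c Z ih => exact htrans (monF ih (HR.A1 _)) (fusDistL _ _ _)
  | semiR Z c ih => exact htrans (monF (HR.A1 _) ih) (fusDistR _ _ _)

end HRlemmas

/-- If X ⊩ A is provable in the natural deduction system R, then τ(X) → τ(A) is a
theorem of the Hilbert system hR, where τ(X) = τ(cf(X)). -/
theorem NDR_to_hR (X : Bunch) (A : Fml) (h : NDR X A) :
    HR (.imp (tau (cf X)) (tau A)) := by
  open HRlemmas in
  induction h with
  | id A => exact HR.A1 _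
  | impI h ih => exact exportF ih
  | impE h1 h2 ih1 ih2 => exact htrans (monF ih1 ih2) (keyF _ _)
  | orI1 B h ih => exact htrans ih (HR.A5 _ _)
  | orI2 A h ih => exact htrans ih (HR.A6 _ _)
  | orE h1 h2 h3 ih1 ih2 ih3 =>
      rename_i X' A' B' C' Y'
      have m : HR ((tau (cf (Y'.fill X'))).imp
          (tau (cf (Y'.fill (.fml (A'.disj B')))))) := fillMono Y' ih1
      exact htrans m (htrans (fillDist A' B' Y') (orCase ih2 ih3))
  | andI h1 h2 ih1 ih2 => exact monConj ih1 ih2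
  | andE h1 h2 ih1 ih2 =>
      rename_i X' A' B' C' Y'
      have m : HR ((tau (cf (Y'.fill X'))).imp
          (tau (cf (Y'.fill (.comma (.fml A') (.fml B')))))) := fillMono Y' ih1
      exact htrans m ih2
  | fusI h1 h2 ih1 ih2 => exact monF ih1 ih2
  | fusE h1 h2 ih1 ih2 =>
      rename_i X' A' B' C' Y'
      have m : HR ((tau (cf (Y'.fill X'))).imp
          (tau (cf (Y'.fill (.semi (.fml A') (.fml B')))))) := fillMono Y' ih1
      exact htrans m ih2
  | negI2 h1 h2 ih1 ih2 =>
      rename_i X' Y' A' B'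
      have e : HR ((tau (cf X')).imp ((tau A').imp (tau B').neg)) := exportF ih1
      have e2 : HR ((tau (cf X')).imp ((tau B').imp (tau A').neg)) :=
        htrans e (HR.contraAx _ _)
      have e3 : HR ((tau (cf X')).imp ((tau (cf Y')).imp (tau A').neg)) :=
        htrans e2 (HR.R2 (HR.A11 _ _ _) ih2)
      exact importF e3
  | negE h ih => exact htrans ih (HR.A9 _)
  | cut h1 h2 ih1 ih2 =>
      rename_i X' A' B' Y'
      have m : HR ((tau (cf (Y'.fill X'))).imp (tau (cf (Y'.fill (.fml A'))))) :=
        fillMono Y' ih1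
      exact htrans m ih2
  | eB h ih =>
      rename_i W' X' Y' Z' A'
      have m : HR ((tau (cf (((X'.comma Y').comma Z')))).imp
          (tau (cf (X'.comma (Y'.comma Z'))))) :=
        conjAssoc (tau (cf X')) (tau (cf Y')) (tau (cf Z'))
      exact htrans (fillMono W' m) ih
  | eC h ih =>
      rename_i W' X' Y' A'
      have m : HR ((tau (cf (Y'.comma X'))).imp (tau (cf (X'.comma Y')))) :=
        conjComm (tau (cf Y')) (tau (cf X'))
      exact htrans (fillMono W' m) ih
  | eW h ih =>
      rename_i W' X' A'
      have m : HR ((tau (cf X')).imp (tau (cf (X'.comma X')))) :=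
        conjIdem (tau (cf X'))
      exact htrans (fillMono W' m) ih
  | eK h ih =>
      rename_i W' X' Y' A'
      have m : HR ((tau (cf (X'.comma Y'))).imp (tau (cf X'))) :=
        HR.A2 (tau (cf X')) (tau (cf Y'))
      exact htrans (fillMono W' m) ih
  | sB h ih =>
      rename_i W' X' Y' Z' A'
      have m : HR ((tau (cf ((X'.semi Y').semi Z'))).imp
          (tau (cf (X'.semi (Y'.semi Z'))))) :=
        fusAssoc (tau (cf X')) (tau (cf Y')) (tau (cf Z'))
      exact htrans (fillMono W' m) ih
  | sC h ih =>
      rename_i W' X' Y' A'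
      have m : HR ((tau (cf (Y'.semi X'))).imp (tau (cf (X'.semi Y')))) :=
        fusComm (tau (cf Y')) (tau (cf X'))
      exact htrans (fillMono W' m) ih
  | sW h ih =>
      rename_i W' X' A'
      have m : HR ((tau (cf X')).imp (tau (cf (X'.semi X')))) :=
        fusIdem (tau (cf X'))
      exact htrans (fillMono W' m) ih
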